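/- arXiv:0911.4118 — 6 statements merged into one kernel-verified Lean document; each statement's English description precedes it below -/
import Mathlib

section
/- Let A, A* be a thin Hessenberg pair on V. Then A is multiplicity-free; that is, A is diagonalizable and each eigenspace of A has dimension one. -/
def IsHessenberg {K : Type*} [Field K] {n : ℕ} (B : Matrix (Fin n) (Fin n) K) : Prop :=
  (∀ i j : Fin n, (j : ℕ) + 1 < (i : ℕ) → B i j = 0) ∧
  (∀ i j : Fin n, (i : ℕ) = (j : ℕ) + 1 → B i j ≠ 0)
/-- A thin Hessenberg pair on `V`. -/
def IsTHPair {K V : Type*} [Field K] [AddCommGroup V] [Module K V] (d : ℕ)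
    (A Astar : Module.End K V) : Prop :=
  (∃ b : Module.Basis (Fin (d + 1)) K V,
      IsHessenberg (LinearMap.toMatrix b b A) ∧ (LinearMap.toMatrix b b Astar).IsDiag) ∧
  (∃ b : Module.Basis (Fin (d + 1)) K V,
      (LinearMap.toMatrix b b A).IsDiag ∧ IsHessenberg (LinearMap.toMatrix b b Astar))

/-! The basis in which `A` is diagonal shows that `A` is diagonalizable. In the basis in which
`A` is Hessenberg, row `i + 1` of the eigenvalue equation expresses the coordinate `vᵢ` through
the later ones, because the subdiagonal entry is nonzero; so an eigenvector is determined by its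
last coordinate, and every eigenspace has dimension at most one. -/

open Module Module.End Matrix

theorem Module.End.iSup_eigenspace_eq_top_of_isDiag_toMatrix {R M ι : Type*} [CommRing R]
    [AddCommGroup M] [Module R M] [Fintype ι] [DecidableEq ι] (f : End R M) (b : Basis ι R M)
    (hf : (LinearMap.toMatrix b b f).IsDiag) : ⨆ μ : R, eigenspace f μ = ⊤ := by
  obtain ⟨D, hD⟩ : ∃ D, toLin b b (diagonal D) = f :=
    ⟨_, by rw [hf.diagonal_diag, toLin_toMatrix]⟩
  refine eq_top_iff.mpr (b.span_eq ▸ Submodule.span_le.mpr ?_)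
  rintro _ ⟨i, rfl⟩
  refine Submodule.mem_iSup_of_mem (D i) (mem_eigenspace_iff.mpr ?_)
  rw [← hD, toLin_self, Finset.sum_eq_single i] <;> simp_all

namespace IsHessenberg

variable {K : Type*} [Field K] {n : ℕ} {M : Matrix (Fin (n + 1)) (Fin (n + 1)) K}

theorem eq_zero_of_mulVec_eq_smul (hM : IsHessenberg M) {μ : K} {v : Fin (n + 1) → K}
    (hv : M *ᵥ v = μ • v) (hlast : v (Fin.last n) = 0) : v = 0 := by
  suffices h : ∀ i j, i ≤ j → v j = 0 from funext fun j => h j j le_rfl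
  intro i
  induction i using Fin.reverseInduction with
  | last => intro j hj; rwa [Fin.last_le_iff.mp hj]
  | cast i ih =>
    have hrow : M i.succ i.castSucc * v i.castSucc = 0 := by
      have := congrFun hv i.succ
      rw [Pi.smul_apply, ih _ le_rfl, smul_zero, mulVec, dotProduct,
        Finset.sum_eq_single i.castSucc] at this
      · exact this
      · intro k _ hk
        rcases lt_or_gt_of_ne hk with hlt | hgt
        · rw [hM.1 _ _ (by simp [Fin.lt_def] at hlt ⊢; omega), zero_mul]
        · rw [ih k (Fin.castSucc_lt_iff_succ_le.mp hgt), mul_zero]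
      · simp
    have hi : v i.castSucc = 0 :=
      (mul_eq_zero.mp hrow).resolve_left (hM.2 _ _ (by simp))
    intro j hj
    rcases hj.eq_or_lt with rfl | hlt
    · exact hi
    · exact ih j (Fin.castSucc_lt_iff_succ_le.mp hlt)

theorem finrank_eigenspace_le_one {V : Type*} [AddCommGroup V] [Module K V] (f : End K V)
    (b : Basis (Fin (n + 1)) K V) (hf : IsHessenberg (LinearMap.toMatrix b b f)) (μ : K) :
    finrank K (eigenspace f μ) ≤ 1 := by
  have hinj : Function.Injective ((b.coord (Fin.last n)).comp (eigenspace f μ).subtype) := by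
    rw [← LinearMap.ker_eq_bot, Submodule.eq_bot_iff]
    rintro ⟨x, hx⟩ hlast
    have hrepr : b.repr x = 0 := by
      refine Finsupp.coe_eq_zero.mp (hf.eq_zero_of_mulVec_eq_smul (μ := μ) ?_ hlast)
      rw [LinearMap.toMatrix_mulVec_repr, mem_eigenspace_iff.mp hx, map_smul, Finsupp.coe_smul]
    simpa using hrepr
  calc finrank K (eigenspace f μ) ≤ finrank K K := LinearMap.finrank_le_finrank_of_injective hinj
    _ = 1 := finrank_self K

end IsHessenberg

/-- Each member of a TH pair is multiplicity-free: diagonalizable with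
all eigenspaces of dimension one. -/
theorem thPair_multiplicity_free {K V : Type*} [Field K] [AddCommGroup V] [Module K V]
    {d : ℕ} (A Astar : Module.End K V) (h : IsTHPair d A Astar) :
    (⨆ μ : K, Module.End.eigenspace A μ) = ⊤ ∧
    ∀ μ : K, Module.End.HasEigenvalue A μ →
      Module.finrank K (Module.End.eigenspace A μ) = 1 := by
  obtain ⟨⟨c, hcHess, -⟩, ⟨b, hbDiag, -⟩⟩ := h
  have : FiniteDimensional K V := Module.Finite.of_basis b
  refine ⟨iSup_eigenspace_eq_top_of_isDiag_toMatrix A b hbDiag, fun μ hμ => ?_⟩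
  exact (hcHess.finrank_eigenspace_le_one A c μ).antisymm
    (pos_finrank_genEigenspace_of_hasEigenvalue hμ one_pos)
end

section
/- Let A, A* be a thin Hessenberg pair on V. If {θ_i}_{i=0}^d and {θ'_i}_{i=0}^d are two eigenvalue sequences of A, A* with θ_0 = θ'_0, then θ_i = θ'_i for 0 ≤ i ≤ d. -/
/-- A thin Hessenberg system on `V`: multiplicity-free `A`, `Astar` with
orderings of primitive idempotents `E`, `Estar` (eigenvalues `θ`, `θs`)
satisfying the Hessenberg conditions. -/
structure THSystem (K V : Type*) [Field K] [AddCommGroup V] [Module K V] (d : ℕ) where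
  A : Module.End K V
  Astar : Module.End K V
  E : Fin (d + 1) → Module.End K V
  Estar : Fin (d + 1) → Module.End K V
  θ : Fin (d + 1) → K
  θs : Fin (d + 1) → K
  finrank_eq : Module.finrank K V = d + 1
  θ_inj : Function.Injective θ
  θs_inj : Function.Injective θs
  sum_E : ∑ i, E i = 1
  E_mul : ∀ i j, E i * E j = if i = j then E i else 0
  E_ne : ∀ i, E i ≠ 0
  sum_Es : ∑ i, Estar i = 1
  Es_mul : ∀ i j, Estar i * Estar j = if i = j then Estar i else 0
  Es_ne : ∀ i, Estar i ≠ 0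
  A_eq : A = ∑ i, θ i • E i
  As_eq : Astar = ∑ i, θs i • Estar i
  EAsE_zero : ∀ i j : Fin (d + 1), (j : ℕ) + 1 < (i : ℕ) → E i * Astar * E j = 0
  EAsE_ne : ∀ i j : Fin (d + 1), (i : ℕ) = (j : ℕ) + 1 → E i * Astar * E j ≠ 0
  EsAEs_zero : ∀ i j : Fin (d + 1), (j : ℕ) + 1 < (i : ℕ) → Estar i * A * Estar j = 0
  EsAEs_ne : ∀ i j : Fin (d + 1), (i : ℕ) = (j : ℕ) + 1 → Estar i * A * Estar j ≠ 0

/-! The two systems share the primitive idempotents of `A`, so the second ordering is a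
permutation `σ` of the first, with `σ 0 = 0`. The Hessenberg conditions for `A*` force
`σ (i + 1) ≤ σ i + 1`, hence `σ i ≤ i` for all `i`, and an injective map below the identity
on a well-ordered set is the identity. -/

theorem Function.Injective.eq_id_of_le {α : Type*} [PartialOrder α] [WellFoundedLT α]
    {σ : α → α} (hinj : Function.Injective σ) (hle : ∀ i, σ i ≤ i) : σ = id := by
  funext i
  induction i using WellFoundedLT.induction with
  | _ i ih =>
    by_contra hne
    exact hne (hinj (ih (σ i) ((hle i).lt_of_ne hne)))

theorem Fin.apply_le_self_of_le_succ {n : ℕ} {σ : Fin (n + 1) → Fin (n + 1)} (h0 : σ 0 = 0)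
    (hstep : ∀ i j : Fin (n + 1), (i : ℕ) = j + 1 → (σ i : ℕ) ≤ σ j + 1)
    (i : Fin (n + 1)) : σ i ≤ i := by
  induction i using Fin.induction with
  | zero => exact h0.le
  | succ i ih =>
    have := hstep i.succ i.castSucc (by simp)
    rw [Fin.le_def] at ih ⊢
    simp only [Fin.val_succ, Fin.val_castSucc] at this ih ⊢
    omega

theorem mul_eq_zero_of_eigenvalue_ne {K R : Type*} [Field K] [Ring R] [Algebra K R] {a e f : R}
    {s t : K} (he : e * a = s • e) (hf : a * f = t • f) (hst : s ≠ t) : e * f = 0 := by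
  have h : (s - t) • (e * f) = 0 := by
    rw [sub_smul, ← smul_mul_assoc, ← he, mul_assoc, hf, mul_smul_comm, sub_self]
  exact (smul_eq_zero.mp h).resolve_left (sub_ne_zero.mpr hst)

namespace THSystem

variable {K V : Type*} [Field K] [AddCommGroup V] [Module K V] {d : ℕ}

theorem E_mul_A (Φ : THSystem K V d) (i : Fin (d + 1)) : Φ.E i * Φ.A = Φ.θ i • Φ.E i := by
  rw [Φ.A_eq, Finset.mul_sum, Finset.sum_eq_single i]
  · rw [mul_smul_comm, Φ.E_mul, if_pos rfl]
  · intro j _ hj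
    rw [mul_smul_comm, Φ.E_mul, if_neg hj.symm, smul_zero]
  · simp

theorem A_mul_E (Φ : THSystem K V d) (i : Fin (d + 1)) : Φ.A * Φ.E i = Φ.θ i • Φ.E i := by
  rw [Φ.A_eq, Finset.sum_mul, Finset.sum_eq_single i]
  · rw [smul_mul_assoc, Φ.E_mul, if_pos rfl]
  · intro j _ hj
    rw [smul_mul_assoc, Φ.E_mul, if_neg hj, smul_zero]
  · simp

variable {Φ Ψ : THSystem K V d}

theorem E_mul_E_eq_zero (hA : Ψ.A = Φ.A) {i j : Fin (d + 1)} (hne : Ψ.θ i ≠ Φ.θ j) :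
    Ψ.E i * Φ.E j = 0 :=
  mul_eq_zero_of_eigenvalue_ne (hA ▸ Ψ.E_mul_A i) (Φ.A_mul_E j) hne

theorem exists_θ_eq (hA : Ψ.A = Φ.A) (i : Fin (d + 1)) : ∃ j, Ψ.θ i = Φ.θ j := by
  by_contra! hne
  apply Ψ.E_ne i
  rw [← mul_one (Ψ.E i), ← Φ.sum_E, Finset.mul_sum]
  exact Finset.sum_eq_zero fun j _ => E_mul_E_eq_zero hA (hne j)

theorem E_eq_of_θ_eq (hA : Ψ.A = Φ.A) {i j : Fin (d + 1)} (hij : Ψ.θ i = Φ.θ j) :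
    Ψ.E i = Φ.E j := by
  have hΨ : Ψ.E i = Ψ.E i * Φ.E j := by
    rw [← Finset.sum_eq_single_of_mem (f := (Ψ.E i * Φ.E ·)) j (Finset.mem_univ j),
      ← Finset.mul_sum, Φ.sum_E, mul_one]
    exact fun k _ hk => E_mul_E_eq_zero hA fun h => hk (Φ.θ_inj (h.symm.trans hij))
  have hΦ : Φ.E j = Ψ.E i * Φ.E j := by
    rw [← Finset.sum_eq_single_of_mem (f := (Ψ.E · * Φ.E j)) i (Finset.mem_univ i),
      ← Finset.sum_mul, Ψ.sum_E, one_mul]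
    exact fun k _ hk => E_mul_E_eq_zero hA fun h => hk (Ψ.θ_inj (h.trans hij.symm))
  rw [hΨ, ← hΦ]

end THSystem

theorem eigenvalue_sequence_unique_general {K V : Type*} [Field K] [AddCommGroup V] [Module K V]
    {d : ℕ} (A Astar : Module.End K V)
    (θ θ' : Fin (d + 1) → K)
    (hθ : ∃ Φ : THSystem K V d, Φ.A = A ∧ Φ.Astar = Astar ∧ Φ.θ = θ)
    (hθ' : ∃ Φ : THSystem K V d, Φ.A = A ∧ Φ.Astar = Astar ∧ Φ.θ = θ')
    (h0 : θ 0 = θ' 0) :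
    θ = θ' := by
  obtain ⟨Φ, rfl, rfl, rfl⟩ := hθ
  obtain ⟨Ψ, hA, hAs, rfl⟩ := hθ'
  choose σ hσ using THSystem.exists_θ_eq hA
  have hσE : ∀ i, Ψ.E i = Φ.E (σ i) := fun i => THSystem.E_eq_of_θ_eq hA (hσ i)
  have hσ_inj : Function.Injective σ := fun i j hij => Ψ.θ_inj (by rw [hσ i, hσ j, hij])
  have hσ0 : σ 0 = 0 := Φ.θ_inj (by rw [← hσ 0, h0])
  have hσ_step : ∀ i j : Fin (d + 1), (i : ℕ) = j + 1 → (σ i : ℕ) ≤ σ j + 1 := by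
    intro i j hij
    by_contra! hlt
    apply Ψ.EAsE_ne i j hij
    rw [hσE, hσE, hAs]
    exact Φ.EAsE_zero _ _ hlt
  have hσ_id : σ = id := hσ_inj.eq_id_of_le (Fin.apply_le_self_of_le_succ hσ0 hσ_step)
  funext i
  rw [hσ i, hσ_id, id]

/-- Two eigenvalue sequences of a TH pair agreeing at index 0 are equal. -/
theorem eigenvalue_sequence_unique {K V : Type*} [Field K] [AddCommGroup V] [Module K V]
    {d : ℕ} (A Astar : Module.End K V) (h : IsTHPair d A Astar)
    (θ θ' : Fin (d + 1) → K)
    (hθ : ∃ Φ : THSystem K V d, Φ.A = A ∧ Φ.Astar = Astar ∧ Φ.θ = θ)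
    (hθ' : ∃ Φ : THSystem K V d, Φ.A = A ∧ Φ.Astar = Astar ∧ Φ.θ = θ')
    (h0 : θ 0 = θ' 0) :
    θ = θ' :=
  eigenvalue_sequence_unique_general A Astar θ θ' hθ hθ' h0
end

section
/- Let A, A* be a thin Hessenberg pair on V. Fix a basis of V and let B (resp. B*) be the matrix representing A (resp. A*) with respect to that basis. Assume B is Hessenberg and B* is upper triangular. Then the sequence of diagonal entries {B*_{ii}}_{i=0}^d is a dual eigenvalue sequence of A, A*; that is, writing E*_i for the primitive idempotent of A* with eigenvalue B*_{ii}, one has E*_i A E*_j = 0 if i - j > 1 and E*_i A E*_j ≠ 0 if i - j = 1. -/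
/-!
The diagonal `θ` of `B*` is the eigenvalue sequence of `A* = ∑ θᵢ Eᵢ`. It has no
repetitions: otherwise `∏_{a ∈ θ(I)} (X - a)` would annihilate `A*` with degree `≤ d`,
which is impossible for a map with a Hessenberg matrix, whose first basis vector is cyclic.
Since `B*` is upper triangular and `Eᵢ A* = A* Eᵢ = θᵢ Eᵢ`, distinctness forces the
matrix `Fᵢ` of `Eᵢ` to vanish in the columns before `i` and in the rows after `i`, and
`(Fᵢ)ᵢᵢ = 1`. So `Fᵢ B Fⱼ` only involves entries `B_kl` with `k ≥ i ≥ j ≥ l`: all of them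
vanish when `i > j + 1`, and when `i = j + 1` the `(i, j)` entry is `B_ij ≠ 0`.
-/

open Polynomial

section Idempotents

variable {K R ι : Type*} [CommSemiring K] [Semiring R] [Algebra K R] [Fintype ι] {e : ι → R}

theorem OrthogonalIdempotents.mul_sum_smul (he : OrthogonalIdempotents e) (θ : ι → K) (i : ι) :
    e i * ∑ k, θ k • e k = θ i • e i := by
  classical
  simp [Finset.mul_sum, he.mul_eq]

theorem OrthogonalIdempotents.sum_smul_mul (he : OrthogonalIdempotents e) (θ : ι → K) (i : ι) :
    (∑ k, θ k • e k) * e i = θ i • e i := by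
  classical
  simp [Finset.sum_mul, he.mul_eq]

theorem OrthogonalIdempotents.sum_smul_mul_sum_smul (he : OrthogonalIdempotents e)
    (f g : ι → K) : (∑ k, f k • e k) * ∑ k, g k • e k = ∑ k, (f k * g k) • e k := by
  classical
  simp [Finset.sum_mul, he.mul_sum_smul, smul_smul]

theorem CompleteOrthogonalIdempotents.aeval_sum_smul (he : CompleteOrthogonalIdempotents e)
    (θ : ι → K) (p : K[X]) : aeval (∑ k, θ k • e k) p = ∑ k, p.eval (θ k) • e k := by
  induction p using Polynomial.induction_on with
  | C a => simp [Algebra.algebraMap_eq_smul_one, ← he.complete, Finset.smul_sum]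
  | add p q hp hq => simp [hp, hq, add_smul, Finset.sum_add_distrib]
  | monomial n a ih =>
    rw [pow_succ, ← mul_assoc, map_mul, ih, aeval_X, he.sum_smul_mul_sum_smul]
    simp [mul_assoc]

end Idempotents

section Triangular

open Matrix

variable {K ι : Type*} [Field K] [LinearOrder ι] [Fintype ι] {M F : Matrix ι ι K} {t : K}

theorem Matrix.IsUpperTriangular.apply_eq_zero_of_right_mul_eq_smul
    (hM : M.IsUpperTriangular) (hF : F * M = t • F) {k : ι} (ht : ∀ l ≤ k, M l l ≠ t) (r : ι) :
    F r k = 0 := by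
  induction k using WellFoundedLT.induction with
  | ind k ih =>
    have hrk : (F * M) r k = F r k * M k k := by
      rw [mul_apply, Finset.sum_eq_single k]
      · intro l _ hl
        rcases lt_or_gt_of_ne hl with hlt | hgt
        · rw [ih l hlt fun l' hl' => ht l' (hl'.trans hlt.le), zero_mul]
        · rw [hM hgt, mul_zero]
      · simp
    have : F r k * (M k k - t) = 0 := by
      rw [mul_sub, ← hrk, hF, smul_apply, smul_eq_mul, mul_comm, sub_self]
    exact (mul_eq_zero.mp this).resolve_right (sub_ne_zero.mpr (ht k le_rfl))

theorem Matrix.IsUpperTriangular.apply_eq_zero_of_left_mul_eq_smul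
    (hM : M.IsUpperTriangular) (hF : M * F = t • F) {k : ι} (ht : ∀ l, k ≤ l → M l l ≠ t) (c : ι) :
    F k c = 0 :=
  IsUpperTriangular.apply_eq_zero_of_right_mul_eq_smul (ι := ιᵒᵈ) (M := Mᵀ) (F := Fᵀ)
    hM.transpose
    (by have h := congrArg transpose hF; rw [transpose_mul, transpose_smul] at h; exact h) ht c

end Triangular

namespace IsHessenberg

section Powers

variable {K : Type*} [Field K] {d : ℕ} {H : Matrix (Fin (d + 1)) (Fin (d + 1)) K}

theorem pow_apply_zero_eq_zero (hH : IsHessenberg H) {m : ℕ} {r : Fin (d + 1)} (hr : m < r) :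
    (H ^ m) r 0 = 0 := by
  induction m generalizing r with
  | zero => simp [Fin.ext_iff, hr.ne']
  | succ m ih =>
    rw [pow_succ', Matrix.mul_apply]
    refine Finset.sum_eq_zero fun l _ => ?_
    rcases le_or_gt (l : ℕ) m with hl | hl
    · rw [hH.1 r l (by omega), zero_mul]
    · rw [ih hl, mul_zero]

theorem pow_apply_zero_ne_zero (hH : IsHessenberg H) (r : Fin (d + 1)) :
    (H ^ (r : ℕ)) r 0 ≠ 0 := by
  induction r using Fin.induction with
  | zero => simp
  | succ l ih =>
    rw [Fin.val_succ, pow_succ', Matrix.mul_apply, Finset.sum_eq_single l.castSucc]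
    · exact mul_ne_zero (hH.2 _ _ (by simp)) ih
    · intro k _ hk
      rcases lt_or_gt_of_ne (Fin.val_ne_of_ne hk) with hlt | hgt
      · rw [hH.1 _ k (by simp at hlt ⊢; omega), zero_mul]
      · rw [hH.pow_apply_zero_eq_zero (by simpa using hgt), mul_zero]
    · simp

theorem aeval_ne_zero_of_monic (hH : IsHessenberg H) {q : K[X]} (hq : q.Monic)
    (hdeg : q.natDegree ≤ d) : aeval H q ≠ 0 := by
  set r : Fin (d + 1) := ⟨q.natDegree, by omega⟩
  intro h0
  have h := congrFun (congrFun h0 r) 0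
  rw [aeval_eq_sum_range, Matrix.sum_apply, Finset.sum_eq_single q.natDegree] at h
  · simp only [Matrix.smul_apply, hq.coeff_natDegree, one_smul, Matrix.zero_apply] at h
    exact hH.pow_apply_zero_ne_zero r h
  · intro m hm hmd
    have hmr : m < r := lt_of_le_of_ne (Nat.lt_succ_iff.mp (Finset.mem_range.mp hm)) hmd
    rw [Matrix.smul_apply, hH.pow_apply_zero_eq_zero hmr, smul_zero]
  · simp

end Powers

section Products

variable {K : Type*} [Field K] {n : ℕ} {B P Q : Matrix (Fin n) (Fin n) K} {i j : Fin n}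

theorem mul_mul_eq_zero (hB : IsHessenberg B) (hP : ∀ ⦃k⦄, k < i → ∀ r, P r k = 0)
    (hQ : ∀ ⦃l⦄, j < l → ∀ c, Q l c = 0) (hij : (j : ℕ) + 1 < i) : P * B * Q = 0 := by
  ext r c
  simp only [Matrix.mul_apply, Finset.sum_mul, Matrix.zero_apply]
  refine Finset.sum_eq_zero fun l _ => Finset.sum_eq_zero fun k _ => ?_
  rcases lt_or_ge k i with hk | hk
  · rw [hP hk r, zero_mul, zero_mul]
  rcases le_or_gt l j with hl | hl
  · rw [hB.1 k l (by rw [Fin.le_def] at hk hl; omega), mul_zero, zero_mul]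
  · rw [hQ hl c, mul_zero]

theorem mul_mul_apply_ne_zero (hB : IsHessenberg B) (hP : ∀ ⦃k⦄, k < i → ∀ r, P r k = 0)
    (hQ : ∀ ⦃l⦄, j < l → ∀ c, Q l c = 0) (hij : (i : ℕ) = j + 1) (hPi : P i i ≠ 0)
    (hQj : Q j j ≠ 0) : (P * B * Q) i j ≠ 0 := by
  have hterm : ∀ k l, (k, l) ≠ (i, j) → P i k * B k l * Q l j = 0 := by
    intro k l hkl
    rcases lt_or_ge k i with hk | hk
    · rw [hP hk i, zero_mul, zero_mul]
    rcases le_or_gt l j with hl | hl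
    · rw [hB.1 k l ?_, mul_zero, zero_mul]
      rw [Fin.le_def] at hk hl
      by_contra! h
      exact hkl (by simp only [Prod.mk.injEq, Fin.ext_iff]; omega)
    · rw [hQ hl j, mul_zero]
  rw [Matrix.mul_apply, Finset.sum_eq_single j, Matrix.mul_apply, Finset.sum_mul,
    Finset.sum_eq_single i]
  · exact mul_ne_zero (mul_ne_zero hPi (hB.2 i j hij)) hQj
  · exact fun k _ hk => hterm k j (by simp [hk])
  · simp
  · intro l _ hl
    rw [Matrix.mul_apply, Finset.sum_mul]
    exact Finset.sum_eq_zero fun k _ => hterm k l (by simp [hl])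
  · simp

end Products

end IsHessenberg

namespace CompleteOrthogonalIdempotents

section Injective

variable {K R : Type*} [Field K] [Ring R] [Algebra K R] {d : ℕ} {e : Fin (d + 1) → R}

theorem injective_of_isHessenberg (he : CompleteOrthogonalIdempotents e) {θ : Fin (d + 1) → K}
    (φ : R →ₐ[K] Matrix (Fin (d + 1)) (Fin (d + 1)) K)
    (hH : IsHessenberg (φ (∑ k, θ k • e k))) : Function.Injective θ := by
  classical
  by_contra hθ
  set q : K[X] := ∏ a ∈ Finset.univ.image θ, (X - C a)
  have hq : aeval (∑ k, θ k • e k) q = 0 := by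
    rw [he.aeval_sum_smul]
    refine Finset.sum_eq_zero fun k _ => ?_
    rw [eval_prod, Finset.prod_eq_zero (Finset.mem_image_of_mem θ (Finset.mem_univ k))
      (by rw [eval_sub, eval_X, eval_C, sub_self]), zero_smul]
  have hdeg : q.natDegree ≤ d := by
    rw [natDegree_finsetProd_X_sub_C_eq_card, ← Nat.lt_succ_iff]
    refine lt_of_le_of_ne (Finset.card_image_le.trans_eq (Finset.card_fin _)) fun hcard => ?_
    refine hθ ?_
    rwa [← Set.injOn_univ, ← Finset.coe_univ, ← Finset.card_image_iff, Finset.card_fin]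
  exact hH.aeval_ne_zero_of_monic (monic_prod_of_monic _ _ fun a _ => monic_X_sub_C a) hdeg
    (by rw [aeval_algHom_apply, hq, map_zero])

end Injective

section Triangular

variable {K ι : Type*} [Field K] [LinearOrder ι] [Fintype ι] {F : ι → Matrix ι ι K}
  {M : Matrix ι ι K}

theorem apply_eq_zero_of_lt (hF : CompleteOrthogonalIdempotents F)
    (hM : M.IsUpperTriangular) (hMF : M = ∑ k, M k k • F k)
    (hθ : Function.Injective fun k => M k k) (i : ι) ⦃k : ι⦄ (hk : k < i) (r : ι) :
    F i r k = 0 := by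
  refine hM.apply_eq_zero_of_right_mul_eq_smul ?_ (fun l hl h => (hl.trans_lt hk).ne (hθ h)) r
  conv_lhs => rw [hMF]
  exact hF.mul_sum_smul _ i

theorem apply_eq_zero_of_gt (hF : CompleteOrthogonalIdempotents F)
    (hM : M.IsUpperTriangular) (hMF : M = ∑ k, M k k • F k)
    (hθ : Function.Injective fun k => M k k) (i : ι) ⦃l : ι⦄ (hl : i < l) (c : ι) :
    F i l c = 0 := by
  refine hM.apply_eq_zero_of_left_mul_eq_smul ?_ (fun l' hl' h => (hl.trans_le hl').ne' (hθ h)) c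
  conv_lhs => rw [hMF]
  exact hF.sum_smul_mul _ i

theorem apply_self_self_eq_one (hF : CompleteOrthogonalIdempotents F)
    (hM : M.IsUpperTriangular) (hMF : M = ∑ k, M k k • F k)
    (hθ : Function.Injective fun k => M k k) (i : ι) : F i i i = 1 := by
  have h := congrFun (congrFun hF.complete i) i
  rw [Matrix.sum_apply, Matrix.one_apply_eq, Finset.sum_eq_single i] at h
  · exact h
  · intro k _ hk
    rcases lt_or_gt_of_ne hk with hlt | hgt
    · exact hF.apply_eq_zero_of_gt hM hMF hθ k hlt i
    · exact hF.apply_eq_zero_of_lt hM hMF hθ k hgt i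
  · simp

end Triangular

end CompleteOrthogonalIdempotents

theorem diag_is_dual_eigenvalue_sequence_general {K V : Type*} [Field K] [AddCommGroup V]
    [Module K V] {d : ℕ} (A Astar : Module.End K V) (h : IsTHPair d A Astar)
    (b : Module.Basis (Fin (d + 1)) K V)
    (hB : IsHessenberg (LinearMap.toMatrix b b A))
    (hBs : ∀ i j : Fin (d + 1), j < i → LinearMap.toMatrix b b Astar i j = 0)
    (Es : Fin (d + 1) → Module.End K V)
    (hsum : ∑ i, Es i = 1)
    (hmul : ∀ i j, Es i * Es j = if i = j then Es i else 0)
    (hAs : Astar = ∑ i, LinearMap.toMatrix b b Astar i i • Es i) :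
    (∀ i j : Fin (d + 1), (j : ℕ) + 1 < (i : ℕ) → Es i * A * Es j = 0) ∧
    (∀ i j : Fin (d + 1), (i : ℕ) = (j : ℕ) + 1 → Es i * A * Es j ≠ 0) := by
  obtain ⟨c, -, hc⟩ := h.2
  have hE : CompleteOrthogonalIdempotents Es :=
    ⟨OrthogonalIdempotents.iff_mul_eq.mpr hmul, hsum⟩
  have hθ : Function.Injective fun k => LinearMap.toMatrix b b Astar k k :=
    hE.injective_of_isHessenberg (LinearMap.toMatrixAlgEquiv c).toAlgHom (by rwa [← hAs])
  set φ := LinearMap.toMatrixAlgEquiv b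
  have hF : CompleteOrthogonalIdempotents fun k => φ (Es k) := hE.map φ.toRingEquiv.toRingHom
  have hBsF : φ Astar = ∑ k, φ Astar k k • φ (Es k) := by
    conv_lhs => rw [hAs]
    simp only [map_sum, map_smul]
    rfl
  have hB' : IsHessenberg (φ A) := hB
  have hBs' : (φ Astar).IsUpperTriangular := hBs
  have hcol := hF.apply_eq_zero_of_lt hBs' hBsF hθ
  have hrow := hF.apply_eq_zero_of_gt hBs' hBsF hθ
  have hdiag : ∀ i, φ (Es i) i i ≠ 0 := fun i => by
    rw [hF.apply_self_self_eq_one hBs' hBsF hθ]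
    exact one_ne_zero
  refine ⟨fun i j hij => φ.injective ?_, fun i j hij h0 => ?_⟩
  · rw [map_mul, map_mul, map_zero]
    exact hB'.mul_mul_eq_zero (hcol i) (hrow j) hij
  · refine hB'.mul_mul_apply_ne_zero (hcol i) (hrow j) hij (hdiag i) (hdiag j) ?_
    rw [← map_mul, ← map_mul, h0, map_zero, Matrix.zero_apply]

/-- If `B` (the matrix of `A`) is Hessenberg and `B*` (the matrix of `A*`) is
upper triangular, then the diagonal of `B*` is a dual eigenvalue sequence:
the corresponding primitive idempotents `Es` of `A*` satisfy
`Es_i A Es_j = 0` for `i - j > 1` and `Es_i A Es_j ≠ 0` for `i - j = 1`. -/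
theorem diag_is_dual_eigenvalue_sequence {K V : Type*} [Field K] [AddCommGroup V]
    [Module K V] {d : ℕ} (A Astar : Module.End K V) (h : IsTHPair d A Astar)
    (b : Module.Basis (Fin (d + 1)) K V)
    (hB : IsHessenberg (LinearMap.toMatrix b b A))
    (hBs : ∀ i j : Fin (d + 1), j < i → LinearMap.toMatrix b b Astar i j = 0)
    (Es : Fin (d + 1) → Module.End K V)
    (hsum : ∑ i, Es i = 1)
    (hmul : ∀ i j, Es i * Es j = if i = j then Es i else 0)
    (hne : ∀ i, Es i ≠ 0)
    (hAs : Astar = ∑ i, LinearMap.toMatrix b b Astar i i • Es i) :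
    (∀ i j : Fin (d + 1), (j : ℕ) + 1 < (i : ℕ) → Es i * A * Es j = 0) ∧
    (∀ i j : Fin (d + 1), (i : ℕ) = (j : ℕ) + 1 → Es i * A * Es j ≠ 0) :=
  diag_is_dual_eigenvalue_sequence_general A Astar h b hB hBs Es hsum hmul hAs
end

section
/- Let Φ be a TH system on V with eigenvalue sequence {θ_i} and dual eigenvalue sequence {θ*_i}. For any nonzero η_0 in E_0 V, the vectors v_i = (A* - θ*_{i+1} I)(A* - θ*_{i+2} I)···(A* - θ*_d I) η_0 for 0 ≤ i ≤ d form a basis of V. -/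
/-! The `E_i` are `d + 1` nonzero orthogonal idempotents summing to `1` on a space of dimension
`d + 1`, so every `E_iV` is a line. Say `w` has leading index `m` if `w ∈ E_0V + ⋯ + E_mV` and
`E_m w ≠ 0`. Since `E_i A* E_j = 0` for `i > j + 1`, applying `A* - θ*_k` to such a `w` kills all
components above `m + 1`, and the `E_{m+1}`-component is `E_{m+1} A* E_m w ≠ 0` because `E_mV` is
spanned by `E_m w` and `E_{m+1} A* E_m ≠ 0`. Hence `v_{d-m}` has leading index `m`, the `v_i` are
triangular with respect to `V = E_0V ⊕ ⋯ ⊕ E_dV`, and `d + 1 = dim V` of them form a basis. -/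

theorem linearIndependent_of_triangular {R M N ι : Type*} [Ring R] [IsDomain R]
    [AddCommGroup M] [Module R M] [AddCommGroup N] [Module R N] [Module.IsTorsionFree R N]
    [Fintype ι] [LinearOrder ι] (f : ι → M) (P : ι → M →ₗ[R] N)
    (h_lt : ∀ i j, i < j → P j (f i) = 0) (h_diag : ∀ i, P i (f i) ≠ 0) :
    LinearIndependent R f := by
  rw [Fintype.linearIndependent_iff]
  intro g hg i
  induction i using WellFoundedGT.induction with
  | _ i ih =>
    have hPi : ∑ k, g k • P i (f k) = 0 := by
      simpa only [map_sum, map_smul, map_zero] using congrArg (P i) hg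
    rw [Finset.sum_eq_single i (fun k _ hki => ?_) (by simp)] at hPi
    · exact (smul_eq_zero.mp hPi).resolve_right (h_diag i)
    · rcases hki.lt_or_gt with hk | hk
      · rw [h_lt k i hk, smul_zero]
      · rw [ih k hk, zero_smul]

section OrthogonalIdempotents

variable {K V ι : Type*} [Field K] [AddCommGroup V] [Module K V] [Fintype ι]
  {E : ι → Module.End K V}

theorem CompleteOrthogonalIdempotents.apply_sum_range (hE : CompleteOrthogonalIdempotents E)
    (x : ∀ i, LinearMap.range (E i)) (j : ι) :
    E j (∑ i, (x i : V)) = x j := by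
  classical
  rw [map_sum, Finset.sum_eq_single j (fun i _ hij => ?_) (by simp)]
  · obtain ⟨y, hy⟩ := (x j).2
    rw [← hy, ← Module.End.mul_apply, (hE.idem j).eq]
  · obtain ⟨y, hy⟩ := (x i).2
    rw [← hy, ← Module.End.mul_apply, hE.ortho hij.symm, LinearMap.zero_apply]

theorem CompleteOrthogonalIdempotents.sum_finrank_range_le [FiniteDimensional K V]
    (hE : CompleteOrthogonalIdempotents E) :
    ∑ i, Module.finrank K (LinearMap.range (E i)) ≤ Module.finrank K V := by
  let sumMap : (∀ i, LinearMap.range (E i)) →ₗ[K] V :=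
    ∑ i, (LinearMap.range (E i)).subtype ∘ₗ LinearMap.proj i
  have h_inj : Function.Injective sumMap := by
    intro x y hxy
    funext j
    apply Subtype.ext
    have hx : sumMap x = ∑ i, (x i : V) := by simp [sumMap]
    have hy : sumMap y = ∑ i, (y i : V) := by simp [sumMap]
    rw [← hE.apply_sum_range x j, ← hE.apply_sum_range y j, ← hx, ← hy, hxy]
  rw [← Module.finrank_pi_fintype K]
  exact LinearMap.finrank_le_finrank_of_injective h_inj

theorem CompleteOrthogonalIdempotents.finrank_range_eq_one
    (hE : CompleteOrthogonalIdempotents E) (hE_ne : ∀ i, E i ≠ 0)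
    (hV : Module.finrank K V = Fintype.card ι) (i : ι) :
    Module.finrank K (LinearMap.range (E i)) = 1 := by
  have : FiniteDimensional K V :=
    Module.finite_of_finrank_pos (hV ▸ Fintype.card_pos_iff.mpr ⟨i⟩)
  have h_pos : ∀ j ∈ Finset.univ, 1 ≤ Module.finrank K (LinearMap.range (E j)) := fun j _ =>
    Submodule.one_le_finrank_iff.mpr (LinearMap.range_eq_bot.not.mpr (hE_ne j))
  have h_sum : ∑ _ : ι, 1 = ∑ j, Module.finrank K (LinearMap.range (E j)) :=
    le_antisymm (Finset.sum_le_sum h_pos) (by simpa [hV] using hE.sum_finrank_range_le)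
  exact ((Finset.sum_eq_sum_iff_of_le h_pos).mp h_sum i (Finset.mem_univ i)).symm

end OrthogonalIdempotents

theorem LinearMap.apply_ne_zero_of_finrank_range_eq_one {K U V W : Type*} [Field K]
    [AddCommGroup U] [Module K U] [AddCommGroup V] [Module K V] [AddCommGroup W] [Module K W]
    {P : U →ₗ[K] V} {F : V →ₗ[K] W}
    (hP : Module.finrank K (LinearMap.range P) = 1) (hFP : F ∘ₗ P ≠ 0)
    {u : V} (hu : u ∈ LinearMap.range P) (hu0 : u ≠ 0) : F u ≠ 0 := by
  intro hFu
  apply hFP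
  ext x
  obtain ⟨c, hc⟩ := (finrank_eq_one_iff_of_nonzero' (⟨u, hu⟩ : LinearMap.range P)
    (by simpa using hu0)).mp hP ⟨P x, LinearMap.mem_range_self P x⟩
  have hPx : c • u = P x := congrArg Subtype.val hc
  rw [LinearMap.comp_apply, ← hPx, map_smul, hFu, smul_zero, LinearMap.zero_apply]

namespace THSystem

variable {K V : Type*} [Field K] [AddCommGroup V] [Module K V] {d : ℕ} (Φ : THSystem K V d)

theorem completeOrthogonalIdempotents_E : CompleteOrthogonalIdempotents Φ.E where
  idem i := (Φ.E_mul i i).trans (if_pos rfl)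
  ortho i j hij := by simpa [hij] using Φ.E_mul i j
  complete := Φ.sum_E

theorem finrank_range_E (i : Fin (d + 1)) : Module.finrank K (LinearMap.range (Φ.E i)) = 1 :=
  Φ.completeOrthogonalIdempotents_E.finrank_range_eq_one Φ.E_ne (by simp [Φ.finrank_eq]) i

theorem sum_E_apply (w : V) : ∑ k, Φ.E k w = w := by
  simpa using congrArg (· w) Φ.sum_E

theorem E_Astar_E_apply_eq_zero {i j : Fin (d + 1)} (hij : (j : ℕ) + 1 < i) (x : V) :
    Φ.E i (Φ.Astar (Φ.E j x)) = 0 := by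
  rw [← Module.End.mul_apply, ← Module.End.mul_apply, Φ.EAsE_zero i j hij,
    LinearMap.zero_apply]

def HasLeadingComponent (m : Fin (d + 1)) (w : V) : Prop :=
  (∀ j, m < j → Φ.E j w = 0) ∧ Φ.E m w ≠ 0

theorem hasLeadingComponent_zero {η : V} (hmem : η ∈ LinearMap.range (Φ.E 0)) (hη : η ≠ 0) :
    Φ.HasLeadingComponent 0 η := by
  obtain ⟨y, rfl⟩ := hmem
  refine ⟨fun j hj => ?_, ?_⟩
  · rw [← Module.End.mul_apply, Φ.completeOrthogonalIdempotents_E.ortho hj.ne',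
      LinearMap.zero_apply]
  · rwa [← Module.End.mul_apply, (Φ.completeOrthogonalIdempotents_E.idem 0).eq]

theorem E_Astar_apply_eq_of_lt {m j : Fin (d + 1)} {w : V} (hw : ∀ k, m < k → Φ.E k w = 0)
    (hj : m < j) : Φ.E j (Φ.Astar w) = Φ.E j (Φ.Astar (Φ.E m w)) := by
  conv_lhs => rw [← Φ.sum_E_apply w]
  rw [map_sum, map_sum, Finset.sum_eq_single m (fun k _ hkm => ?_) (by simp)]
  rcases hkm.lt_or_gt with hk | hk
  · exact Φ.E_Astar_E_apply_eq_zero (by omega) w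
  · rw [hw k hk, map_zero, map_zero]

variable {Φ} in
theorem HasLeadingComponent.succ {i : Fin d} {w : V} (hw : Φ.HasLeadingComponent i.castSucc w)
    (c : K) : Φ.HasLeadingComponent i.succ ((Φ.Astar - c • 1) w) := by
  obtain ⟨h_above, h_lead⟩ := hw
  have h_shift : ∀ j, i.castSucc < j →
      Φ.E j ((Φ.Astar - c • 1) w) = Φ.E j (Φ.Astar (Φ.E i.castSucc w)) := by
    intro j hj
    rw [LinearMap.sub_apply, LinearMap.smul_apply, Module.End.one_apply, map_sub, map_smul,
      h_above j hj, smul_zero, sub_zero, Φ.E_Astar_apply_eq_of_lt h_above hj]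
  refine ⟨fun j hj => ?_, ?_⟩
  · rw [h_shift j (Fin.castSucc_lt_succ.trans hj)]
    exact Φ.E_Astar_E_apply_eq_zero (by simpa [Fin.lt_def] using hj) _
  · rw [h_shift _ Fin.castSucc_lt_succ]
    exact LinearMap.apply_ne_zero_of_finrank_range_eq_one (Φ.finrank_range_E _)
      (Φ.EAsE_ne _ _ (by simp)) (LinearMap.mem_range_self _ w) h_lead

end THSystem

/-- For nonzero `η₀ ∈ E_0 V`, the vectors
`v_i = (A* - θ*_{i+1} I) ⋯ (A* - θ*_d I) η₀` form a basis of `V`. -/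
theorem split_vectors_form_basis {K V : Type*} [Field K] [AddCommGroup V] [Module K V]
    {d : ℕ} (Φ : THSystem K V d) (η₀ : V) (hη : η₀ ≠ 0)
    (hmem : η₀ ∈ LinearMap.range (Φ.E 0))
    (v : Fin (d + 1) → V) (hvd : v (Fin.last d) = η₀)
    (hrec : ∀ i : ℕ, ∀ h : i < d, v ⟨i, by omega⟩ =
      (Φ.Astar - Φ.θs ⟨i + 1, by omega⟩ • (1 : Module.End K V)) (v ⟨i + 1, by omega⟩)) :
    LinearIndependent K v ∧ Submodule.span K (Set.range v) = ⊤ := by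
  have h_lead : ∀ m : Fin (d + 1), Φ.HasLeadingComponent m (v m.rev) := by
    intro m
    induction m using Fin.induction with
    | zero => rw [Fin.rev_zero, hvd]; exact Φ.hasLeadingComponent_zero hmem hη
    | succ i ih =>
      have h_step : v i.rev.castSucc = (Φ.Astar - Φ.θs i.rev.succ • 1) (v i.rev.succ) :=
        hrec i.rev i.rev.isLt
      rw [Fin.rev_castSucc] at ih
      rw [Fin.rev_succ, h_step]
      exact ih.succ _
  have hv : LinearIndependent K v := (linearIndependent_equiv Fin.revPerm).mp <|
    linearIndependent_of_triangular _ Φ.E (fun i => (h_lead i).1) fun i => (h_lead i).2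
  exact ⟨hv, hv.span_eq_top_of_card_eq_finrank (by simp [Φ.finrank_eq])⟩
end

section
/- Let Φ be a TH system on V and let 0 ≠ η_0 ∈ E_0 V. A sequence of vectors {v_i}_{i=0}^d in V, not all zero, equals a Φ-standard basis (i.e., v_i = E*_i η_0 for some nonzero η_0 ∈ E_0 V) if and only if (i) v_i ∈ E*_i V for 0 ≤ i ≤ d and (ii) Σ_{i=0}^d v_i ∈ E_0 V. -/
namespace OrthogonalIdempotents

variable {R M ι : Type*} [Semiring R] [AddCommMonoid M] [Module R M] {e : ι → Module.End R M}

theorem apply_of_mem_range [DecidableEq ι] (he : OrthogonalIdempotents e) {i j : ι} {x : M}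
    (hx : x ∈ LinearMap.range (e j)) : e i x = if i = j then x else 0 := by
  obtain ⟨y, rfl⟩ := hx
  rw [← Module.End.mul_apply, he.mul_eq]
  split_ifs with h <;> simp [h]

theorem apply_sum_of_mem_range [Fintype ι] (he : OrthogonalIdempotents e) {v : ι → M}
    (hv : ∀ j, v j ∈ LinearMap.range (e j)) (i : ι) : e i (∑ j, v j) = v i := by
  classical
  simp [he.apply_of_mem_range (hv _)]

end OrthogonalIdempotents

theorem CompleteOrthogonalIdempotents.sum_apply {R M ι : Type*} [Semiring R] [AddCommMonoid M]
    [Module R M] [Fintype ι] {e : ι → Module.End R M} (he : CompleteOrthogonalIdempotents e)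
    (x : M) : ∑ i, e i x = x := by
  rw [← LinearMap.sum_apply, he.complete, Module.End.one_apply]

theorem THSystem.completeOrthogonalIdempotents_Estar {K V : Type*} [Field K] [AddCommGroup V]
    [Module K V] {d : ℕ} (Φ : THSystem K V d) : CompleteOrthogonalIdempotents Φ.Estar :=
  ⟨OrthogonalIdempotents.iff_mul_eq.2 Φ.Es_mul, Φ.sum_Es⟩

/-- Characterization of `Φ`-standard bases: `v`, not all zero, has the form
`v_i = E*_i η₀` for some nonzero `η₀ ∈ E_0 V` iff `v_i ∈ E*_i V` for all `i`
and `Σ_i v_i ∈ E_0 V`. -/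
theorem standardBasis_characterization {K V : Type*} [Field K] [AddCommGroup V]
    [Module K V] {d : ℕ} (Φ : THSystem K V d)
    (v : Fin (d + 1) → V) (hv : ∃ i, v i ≠ 0) :
    (∃ η₀ : V, η₀ ≠ 0 ∧ η₀ ∈ LinearMap.range (Φ.E 0) ∧ ∀ i, v i = Φ.Estar i η₀) ↔
      ((∀ i, v i ∈ LinearMap.range (Φ.Estar i)) ∧
        (∑ i, v i) ∈ LinearMap.range (Φ.E 0)) := by
  have hE := Φ.completeOrthogonalIdempotents_Estar
  constructor
  · rintro ⟨η₀, -, hη₀, hvη⟩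
    obtain rfl : v = fun i => Φ.Estar i η₀ := funext hvη
    exact ⟨fun i => LinearMap.mem_range_self _ η₀, by rwa [hE.sum_apply]⟩
  · rintro ⟨hrange, hsum⟩
    have hcoord := hE.apply_sum_of_mem_range hrange
    obtain ⟨i, hi⟩ := hv
    refine ⟨∑ j, v j, fun h0 => hi ?_, hsum, fun j => (hcoord j).symm⟩
    rw [← hcoord i, h0, map_zero]
end

section
/- Let {θ*_i}_{i=0}^d be mutually distinct elements of a field K. Let T be the upper triangular (d+1)x(d+1) matrix with entries T_{ij} = (θ*_i - θ*_{j+1})(θ*_i - θ*_{j+2})···(θ*_i - θ*_d) for 0 ≤ i ≤ j ≤ d and T_{ij} = 0 for i > j. Then T is invertible and T^{-1} is upper triangular with entries T^{-1}_{ij} = 1 / [ (θ*_j - θ*_i)(θ*_j - θ*_{i+1})···(θ*_j - θ*_{j-1}) · (θ*_j - θ*_{j+1})···(θ*_j - θ*_d) ] for 0 ≤ i ≤ j ≤ d. -/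
/-!
Entry `(i, j)` of `S * T` is `∑_{k ≥ i} f(θ*_k) / ∏_{l ≥ i, l ≠ k} (θ*_k - θ*_l)` with
`f(x) = ∏_{l > j} (x - θ*_l)` (for `k > j` both `T_{kj}` and `f(θ*_k)` vanish). By Lagrange
interpolation on the nodes `θ*_i, …, θ*_d`, this sum is the coefficient of `x^(d-i)` in `f`; as `f`
is monic of degree `d - j`, it is `1` for `i = j` and `0` for `i < j`. A left inverse of a square
matrix is also a right inverse.
-/

open Finset Polynomial

namespace Lagrange

variable {F ι : Type*} [Field F] [DecidableEq ι] {s t : Finset ι} {v : ι → F}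

theorem sum_prod_sub_div_prod_erase_sub (hvs : Set.InjOn v s) (hts : #t < #s) :
    ∑ i ∈ s, (∏ j ∈ t, (v i - v j)) / ∏ j ∈ s.erase i, (v i - v j) =
      if #t + 1 = #s then 1 else 0 := by
  have hdeg : (nodal t v).degree < #s := by rw [degree_nodal]; exact_mod_cast hts
  have hcoeff := coeff_eq_sum hvs hdeg
  simp only [eval_nodal] at hcoeff
  rw [← hcoeff]
  split_ifs with hcard
  · rw [← hcard, Nat.add_sub_cancel, ← natDegree_nodal (v := v), ← leadingCoeff,
      nodal_monic.leadingCoeff]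
  · exact coeff_eq_zero_of_natDegree_lt (by rw [natDegree_nodal]; omega)

end Lagrange

section TransitionMatrix

variable {K : Type*} [Field K] {n : ℕ} (θs : Fin n → K)

def transitionMatrix : Matrix (Fin n) (Fin n) K :=
  Matrix.of fun i j => if i ≤ j then ∏ k ∈ Ioi j, (θs i - θs k) else 0

def transitionMatrixInv : Matrix (Fin n) (Fin n) K :=
  Matrix.of fun i j => if i ≤ j then (∏ k ∈ (Ici i).erase j, (θs j - θs k))⁻¹ else 0

theorem transitionMatrixInv_mul_transitionMatrix_apply (i j : Fin n) :
    (transitionMatrixInv θs * transitionMatrix θs) i j =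
      ∑ k ∈ Ici i, (∏ l ∈ Ioi j, (θs k - θs l)) / ∏ l ∈ (Ici i).erase k, (θs k - θs l) := by
  rw [Matrix.mul_apply, ← sum_subset (subset_univ (Ici i))
    fun k _ hk => by simp_all [transitionMatrixInv]]
  refine sum_congr rfl fun k hk => ?_
  simp only [transitionMatrixInv, transitionMatrix, Matrix.of_apply, if_pos (mem_Ici.1 hk)]
  split_ifs with hkj
  · rw [div_eq_inv_mul]
  · rw [prod_eq_zero (mem_Ioi.2 (not_le.1 hkj)) (sub_self _), mul_zero, zero_div]

variable {θs}

theorem transitionMatrixInv_mul_transitionMatrix (hθ : Function.Injective θs) :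
    transitionMatrixInv θs * transitionMatrix θs = 1 := by
  ext i j
  rw [transitionMatrixInv_mul_transitionMatrix_apply, Matrix.one_apply]
  rcases le_or_gt i j with hij | hji
  · have hcard : #(Ioi j) < #(Ici i) := by
      rw [Fin.card_Ici, Fin.card_Ioi]; omega
    rw [Lagrange.sum_prod_sub_div_prod_erase_sub hθ.injOn hcard]
    refine if_congr ?_ rfl rfl
    rw [Fin.card_Ici, Fin.card_Ioi, Fin.ext_iff]
    omega
  · refine (sum_eq_zero fun k hk => ?_).trans (if_neg hji.ne').symm
    rw [prod_eq_zero (mem_Ioi.2 (hji.trans_le (mem_Ici.1 hk))) (sub_self _), zero_div]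

theorem transitionMatrix_mul_transitionMatrixInv (hθ : Function.Injective θs) :
    transitionMatrix θs * transitionMatrixInv θs = 1 :=
  mul_eq_one_comm.mp (transitionMatrixInv_mul_transitionMatrix hθ)

end TransitionMatrix

/-- For mutually distinct scalars `θ*_0, …, θ*_d`, the upper triangular matrix
`T` with `T_{ij} = (θ*_i - θ*_{j+1})⋯(θ*_i - θ*_d)` for `i ≤ j` is invertible,
with inverse the upper triangular matrix `S` whose `(i,j)` entry for `i ≤ j` is
the reciprocal of `∏_{i ≤ k ≤ d, k ≠ j} (θ*_j - θ*_k)`. -/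
theorem transition_matrix_inverse {K : Type*} [Field K] {d : ℕ}
    (θs : Fin (d + 1) → K) (h : Function.Injective θs)
    (T S : Matrix (Fin (d + 1)) (Fin (d + 1)) K)
    (hT : ∀ i j : Fin (d + 1), T i j =
      if i ≤ j then ∏ k ∈ Finset.Ioi j, (θs i - θs k) else 0)
    (hS : ∀ i j : Fin (d + 1), S i j =
      if i ≤ j then (∏ k ∈ (Finset.Ici i).erase j, (θs j - θs k))⁻¹ else 0) :
    T * S = 1 ∧ S * T = 1 := by
  obtain rfl : T = transitionMatrix θs := Matrix.ext hT
  obtain rfl : S = transitionMatrixInv θs := Matrix.ext hS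
  exact ⟨transitionMatrix_mul_transitionMatrixInv h, transitionMatrixInv_mul_transitionMatrix h⟩
end
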